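/- arXiv:2212.07534 — 2 statements merged into one kernel-verified Lean document; each statement's English description precedes it below -/
import Mathlib

section
/- Almost-sure consensus of Algorithm 2: Suppose each ∇f_i is ν-Lipschitz and uniformly bounded (‖∇f_i(θ)‖ ≤ G for all θ), the weight matrix W is symmetric and doubly stochastic with η := ‖W − (1/m)𝟏𝟏ᵀ‖ < 1, and the stepsizes are square summable, i.e., Σ_{k=0}^∞ (λ^k)² < ∞. Then for every agent i, lim_{k→∞} ‖x_i^k − x̄^k‖ = 0 holds almost surely. -/
/-!
Let `Q = W - 𝟏𝟏ᵀ/m`. Because `W` is doubly stochastic, the disagreement vector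
`eᵏ = xᵏ - 𝟏 ⊗ x̄ᵏ` satisfies `eᵏ⁺¹ = (Q ⊗ I)(eᵏ - λᵏ(gᵏ + Nᵏ))`, and `‖Q ⊗ I‖ ≤ ‖Q‖ = η`, so
`‖eᵏ⁺¹‖ ≤ η (‖eᵏ‖ + λᵏ ‖gᵏ + Nᵏ‖)`. The gradients are bounded and `λᵏ → 0`; for the noise,
`∑ₖ 𝔼[(λᵏ n)²] = σ ∑ₖ (λᵏ)² < ∞`, so almost surely `λᵏ Nᵏ → 0`. A contraction driven by a
null sequence tends to zero.
-/

open MeasureTheory ProbabilityTheory Filter Topology WithLp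
open scoped NNReal Matrix ENNReal

lemma tendsto_zero_of_tendsto_sq {α : Type*} {l : Filter α} {u : α → ℝ}
    (h : Tendsto (fun a => u a ^ 2) l (𝓝 0)) : Tendsto u l (𝓝 0) := by
  rw [tendsto_zero_iff_abs_tendsto_zero]
  simpa [Function.comp_def, Real.sqrt_sq_eq_abs] using (Real.continuous_sqrt.tendsto 0).comp h

lemma tendsto_zero_of_le_mul_add {η : ℝ} (hη0 : 0 ≤ η) (hη1 : η < 1) {S b : ℕ → ℝ}
    (hS : ∀ k, 0 ≤ S k) (hb : Tendsto b atTop (𝓝 0))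
    (hrec : ∀ k, S (k + 1) ≤ η * (S k + b k)) : Tendsto S atTop (𝓝 0) := by
  refine tendsto_order.2 ⟨fun a ha => .of_forall fun k => ha.trans_le (hS k), fun ε hε => ?_⟩
  have hδ : 0 < (1 - η) * (ε / 2) := mul_pos (by linarith) (by linarith)
  obtain ⟨K, hK⟩ := eventually_atTop.1 (hb.eventually (ge_mem_nhds hδ))
  -- once `b k ≤ (1 - η) ε / 2`, the excess `S k - ε / 2` contracts by the factor `η`
  have hcontract : ∀ k ≥ K, S k - ε / 2 ≤ η ^ (k - K) * (S K - ε / 2) := by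
    intro k hk
    induction k, hk using Nat.le_induction with
    | base => simp
    | succ k hk ih =>
      rw [Nat.sub_add_comm hk, pow_succ]
      nlinarith [hrec k, mul_le_mul_of_nonneg_left (hK k hk) hη0,
        mul_le_mul_of_nonneg_left ih hη0]
  have hpow : Tendsto (fun k => η ^ (k - K) * (S K - ε / 2)) atTop (𝓝 0) := by
    simpa using ((tendsto_pow_atTop_nhds_zero_of_lt_one hη0 hη1).comp
      (tendsto_sub_atTop_nat K)).mul_const (S K - ε / 2)
  filter_upwards [eventually_ge_atTop K, hpow.eventually (gt_mem_nhds (half_pos hε))]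
    with k hk hsmall
  linarith [hcontract k hk]

section Noise

variable {Ω : Type*} [MeasurableSpace Ω] {μ : Measure Ω}

lemma ae_tendsto_zero_of_tsum_lintegral_ne_top {Y : ℕ → Ω → ℝ≥0∞}
    (hY : ∀ k, AEMeasurable (Y k) μ) (h : ∑' k, ∫⁻ ω, Y k ω ∂μ ≠ ∞) :
    ∀ᵐ ω ∂μ, Tendsto (fun k => Y k ω) atTop (𝓝 0) := by
  rw [← lintegral_tsum hY] at h
  filter_upwards [ae_lt_top' (AEMeasurable.tsum hY) h] with ω hω
  exact ENNReal.tendsto_atTop_zero_of_tsum_ne_top hω.ne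

lemma ae_tendsto_mul_zero_of_summable_sq {ν : Measure ℝ} [NeZero ν]
    (hν : Integrable (fun y => y ^ 2) ν) {Z : ℕ → Ω → ℝ} (hZ : ∀ k, μ.map (Z k) = ν)
    {c : ℕ → ℝ} (hc : Summable fun k => c k ^ 2) :
    ∀ᵐ ω ∂μ, Tendsto (fun k => c k * Z k ω) atTop (𝓝 0) := by
  have hZmeas : ∀ k, AEMeasurable (Z k) μ := fun k =>
    aemeasurable_of_map_neZero (by rw [hZ k]; infer_instance)
  have hsplit : ∀ k ω, ENNReal.ofReal ((c k * Z k ω) ^ 2)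
      = ENNReal.ofReal (c k ^ 2) * ENNReal.ofReal (Z k ω ^ 2) := fun k ω => by
    rw [mul_pow, ENNReal.ofReal_mul (sq_nonneg _)]
  have hmoment : ∀ k, ∫⁻ ω, ENNReal.ofReal ((c k * Z k ω) ^ 2) ∂μ
      = ENNReal.ofReal (c k ^ 2) * ∫⁻ y, ENNReal.ofReal (y ^ 2) ∂ν := fun k => by
    simp_rw [hsplit, ← hZ k]
    rw [lintegral_const_mul' _ _ ENNReal.ofReal_ne_top,
      lintegral_map' (by fun_prop) (hZmeas k)]
  have hY := ae_tendsto_zero_of_tsum_lintegral_ne_top (μ := μ)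
    (Y := fun k ω => ENNReal.ofReal ((c k * Z k ω) ^ 2)) (fun k => by fun_prop) (by
      simp_rw [hmoment, ENNReal.tsum_mul_right,
        ← ENNReal.ofReal_tsum_of_nonneg (fun k => sq_nonneg _) hc]
      exact ENNReal.mul_ne_top ENNReal.ofReal_ne_top hν.lintegral_lt_top.ne)
  filter_upwards [hY] with ω hω
  refine tendsto_zero_of_tendsto_sq ?_
  simpa [Function.comp_def, ENNReal.toReal_ofReal (sq_nonneg _)] using
    (ENNReal.tendsto_toReal ENNReal.zero_ne_top).comp hω

end Noise

section StackedNorm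

variable {n ι : Type*} [Fintype n] [Fintype ι]

lemma norm_toLp_le_of_forall_norm_le {E : Type*} [SeminormedAddCommGroup E]
    {v : n → E} {C : ℝ} (hC : 0 ≤ C) (hv : ∀ i, ‖v i‖ ≤ C) :
    ‖toLp 2 v‖ ≤ √(Fintype.card n) * C := by
  rw [PiLp.norm_eq_of_L2, ← Real.sqrt_sq hC, ← Real.sqrt_mul (Nat.cast_nonneg _)]
  refine Real.sqrt_le_sqrt ((Finset.sum_le_sum fun i _ =>
    pow_le_pow_left₀ (norm_nonneg _) (hv i) 2).trans_eq ?_)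
  simp

lemma norm_toLp_sq_eq_sum_coord (v : n → EuclideanSpace ℝ ι) :
    ‖toLp 2 v‖ ^ 2 = ∑ c, ‖toLp 2 (fun i => v i c)‖ ^ 2 := by
  simp only [PiLp.norm_sq_eq_of_L2]
  exact Finset.sum_comm

/-- `fun i => ∑ j, Q i j • v j` is `(Q ⊗ I) v`, which acts on every coordinate `c` as `Q`. -/
lemma norm_toLp_sum_smul_le [DecidableEq n] (Q : Matrix n n ℝ) (v : n → EuclideanSpace ℝ ι) :
    ‖toLp 2 (fun i => ∑ j, Q i j • v j)‖
      ≤ ‖Matrix.toEuclideanCLM (𝕜 := ℝ) (n := n) Q‖ * ‖toLp 2 v‖ := by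
  rw [← pow_le_pow_iff_left₀ (norm_nonneg _) (by positivity) two_ne_zero, mul_pow,
    norm_toLp_sq_eq_sum_coord, norm_toLp_sq_eq_sum_coord, Finset.mul_sum]
  refine Finset.sum_le_sum fun c _ => ?_
  have hcoord : toLp 2 (fun i => (∑ j, Q i j • v j) c)
      = Matrix.toEuclideanCLM (𝕜 := ℝ) (n := n) Q (toLp 2 fun j => v j c) := by
    rw [Matrix.toEuclideanCLM_toLp]
    congr 1
    ext i
    simp [Matrix.mulVec, dotProduct]
  rw [hcoord, ← mul_pow]
  exact pow_le_pow_left₀ (norm_nonneg _) (ContinuousLinearMap.le_opNorm _ _) 2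

lemma tendsto_norm_toLp_zero {α : Type*} {l : Filter α} {v : α → n → EuclideanSpace ℝ ι}
    (hv : ∀ j c, Tendsto (fun a => v a j c) l (𝓝 0)) :
    Tendsto (fun a => ‖toLp 2 (v a)‖) l (𝓝 0) := by
  have hcoord : ∀ j, Tendsto (fun a => v a j) l (𝓝 0) := fun j => by
    simpa [Function.comp_def] using
      ((PiLp.continuous_toLp 2 _).tendsto 0).comp (tendsto_pi_nhds.2 (hv j))
  simpa [Function.comp_def] using
    (((PiLp.continuous_toLp 2 _).tendsto 0).comp (tendsto_pi_nhds.2 hcoord)).norm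

lemma tendsto_mul_norm_toLp_add {α : Type*} {l : Filter α} {t : α → ℝ} (ht : ∀ a, 0 ≤ t a)
    (ht0 : Tendsto t l (𝓝 0)) {u v : α → n → EuclideanSpace ℝ ι} {C : ℝ} (hC : 0 ≤ C)
    (hu : ∀ a j, ‖u a j‖ ≤ C) (hv : ∀ j c, Tendsto (fun a => t a * v a j c) l (𝓝 0)) :
    Tendsto (fun a => t a * ‖toLp 2 (u a + v a)‖) l (𝓝 0) := by
  have hbound : ∀ a, t a * ‖toLp 2 (u a + v a)‖
      ≤ t a * (√(Fintype.card n) * C) + ‖toLp 2 (t a • v a)‖ := fun a =>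
    calc t a * ‖toLp 2 (u a + v a)‖
        ≤ t a * (√(Fintype.card n) * C + ‖toLp 2 (v a)‖) := by
          refine mul_le_mul_of_nonneg_left ?_ (ht a)
          rw [toLp_add]
          exact (norm_add_le _ _).trans
            (add_le_add_left (norm_toLp_le_of_forall_norm_le hC (hu a)) _)
      _ = t a * (√(Fintype.card n) * C) + ‖toLp 2 (t a • v a)‖ := by
          rw [toLp_smul, norm_smul, Real.norm_of_nonneg (ht a)]
          ring
  have hnoise := tendsto_norm_toLp_zero (v := fun a => t a • v a) (by simpa using hv)
  exact squeeze_zero (fun a => mul_nonneg (ht a) (norm_nonneg _)) hbound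
    (by simpa using (ht0.mul_const _).add hnoise)

end StackedNorm

section Consensus

variable {n : Type*} [Fintype n]

noncomputable def consensusError {M : Type*} [AddCommGroup M] [Module ℝ M] (x : n → M) : n → M :=
  fun i => x i - (Fintype.card n : ℝ)⁻¹ • ∑ j, x j

lemma consensusError_mix {M : Type*} [AddCommGroup M] [Module ℝ M] {W : Matrix n n ℝ}
    (hrow : W *ᵥ (fun _ => (1 : ℝ)) = fun _ => 1) (hcol : (fun _ => (1 : ℝ)) ᵥ* W = fun _ => 1)
    (y : n → M) (c : M) :
    consensusError (fun i => ∑ j, W i j • y j) = fun i =>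
      ∑ j, (W - (Fintype.card n : ℝ)⁻¹ • Matrix.of fun _ _ => (1 : ℝ) : Matrix n n ℝ) i j
        • (y j - c) := by
  ext i
  have hcard : (Fintype.card n : ℝ) ≠ 0 := Nat.cast_ne_zero.2 (Fintype.card_pos_iff.2 ⟨i⟩).ne'
  have hrow_i : ∑ j, W i j = 1 := by simpa [Matrix.mulVec, dotProduct] using congrFun hrow i
  have hmean : ∑ i', ∑ j, W i' j • y j = ∑ j, y j := by
    rw [Finset.sum_comm]
    refine Finset.sum_congr rfl fun j _ => ?_
    rw [← Finset.sum_smul, show ∑ i', W i' j = 1 by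
      simpa [Matrix.vecMul, dotProduct] using congrFun hcol j, one_smul]
  simp only [consensusError, hmean, Matrix.sub_apply, Matrix.smul_apply, Matrix.of_apply,
    smul_eq_mul, mul_one, sub_smul, smul_sub, Finset.sum_sub_distrib, ← Finset.sum_smul, hrow_i,
    Finset.sum_const, Finset.card_univ, nsmul_eq_mul, mul_inv_cancel₀ hcard, one_smul, sub_self,
    sub_zero, Finset.smul_sum]

lemma norm_consensusError_step {ι : Type*} [Fintype ι] [DecidableEq n] {W : Matrix n n ℝ}
    (hrow : W *ᵥ (fun _ => (1 : ℝ)) = fun _ => 1) (hcol : (fun _ => (1 : ℝ)) ᵥ* W = fun _ => 1)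
    (x g : n → EuclideanSpace ℝ ι) {t : ℝ} (ht : 0 ≤ t) :
    ‖toLp 2 (consensusError fun i => ∑ j, W i j • (x j - t • g j))‖
      ≤ ‖Matrix.toEuclideanCLM (𝕜 := ℝ) (n := n)
          (W - (Fintype.card n : ℝ)⁻¹ • Matrix.of fun _ _ => (1 : ℝ))‖
        * (‖toLp 2 (consensusError x)‖ + t * ‖toLp 2 g‖) := by
  rw [consensusError_mix hrow hcol _ ((Fintype.card n : ℝ)⁻¹ • ∑ j, x j)]
  refine (norm_toLp_sum_smul_le _ _).trans (mul_le_mul_of_nonneg_left ?_ (norm_nonneg _))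
  calc ‖toLp 2 fun j => x j - t • g j - (Fintype.card n : ℝ)⁻¹ • ∑ j, x j‖
      = ‖toLp 2 (consensusError x) - t • toLp 2 g‖ := by
        congr 1
        ext j : 2
        simp only [consensusError, PiLp.sub_apply, PiLp.smul_apply]
        abel
    _ ≤ ‖toLp 2 (consensusError x)‖ + ‖t • toLp 2 g‖ := norm_sub_le _ _
    _ = ‖toLp 2 (consensusError x)‖ + t * ‖toLp 2 g‖ := by
        rw [norm_smul, Real.norm_of_nonneg ht]

end Consensus

theorem almost_sure_consensus_general
    {m d : ℕ}
    (f : Fin m → EuclideanSpace ℝ (Fin d) → ℝ)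
    (G : ℝ≥0)
    (hG : ∀ i θ, ‖gradient (f i) θ‖ ≤ (G : ℝ))
    (W : Matrix (Fin m) (Fin m) ℝ)
    (hWrow : W *ᵥ (fun _ => (1 : ℝ)) = fun _ => 1)
    (hWcol : (fun _ => (1 : ℝ)) ᵥ* W = fun _ => 1)
    (hη : ‖Matrix.toEuclideanCLM (𝕜 := ℝ) (n := Fin m)
        (W - (m : ℝ)⁻¹ • Matrix.of (fun _ _ => (1 : ℝ)))‖ < 1)
    (lam : ℕ → ℝ) (hlam : ∀ k, 0 ≤ lam k)
    (hsq : Summable (fun k => lam k ^ 2))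
    {Ω : Type*} [MeasureSpace Ω]
    (σ : ℝ≥0)
    (N : ℕ → Ω → Fin m → EuclideanSpace ℝ (Fin d))
    (hdist : ∀ k i j, Measure.map (fun ω => N k ω i j) ℙ = gaussianReal 0 σ)
    (x : ℕ → Ω → Fin m → EuclideanSpace ℝ (Fin d))
    (hx : ∀ k ω i, x (k + 1) ω i =
      ∑ j, W i j • (x k ω j - lam k • (gradient (f j) (x k ω j) + N k ω j))) :
    ∀ᵐ ω ∂ℙ, ∀ i,
      Tendsto (fun k => ‖x k ω i - (m : ℝ)⁻¹ • ∑ j, x k ω j‖) atTop (nhds 0) := by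
  have hnoise : ∀ᵐ ω ∂ℙ, ∀ j c, Tendsto (fun k => lam k * N k ω j c) atTop (𝓝 0) := by
    simp only [ae_all_iff]
    exact fun j c => ae_tendsto_mul_zero_of_summable_sq
      (memLp_id_gaussianReal' 2 (by simp)).integrable_sq (fun k => hdist k j c) hsq
  filter_upwards [hnoise] with ω hω i
  set g := fun k => (fun j => gradient (f j) (x k ω j)) + N k ω
  have hdrift : Tendsto (fun k => lam k * ‖toLp 2 (g k)‖) atTop (𝓝 0) :=
    tendsto_mul_norm_toLp_add hlam (tendsto_zero_of_tendsto_sq hsq.tendsto_atTop_zero) G.2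
      (fun k j => hG j (x k ω j)) hω
  have hS : Tendsto (fun k => ‖toLp 2 (consensusError (x k ω))‖) atTop (𝓝 0) := by
    refine tendsto_zero_of_le_mul_add (norm_nonneg _) hη (fun _ => norm_nonneg _) hdrift
      fun k => ?_
    have hstep := norm_consensusError_step hWrow hWcol (x k ω) (g k) (hlam k)
    rw [Fintype.card_fin] at hstep
    rwa [funext (hx k ω)]
  refine squeeze_zero (fun _ => norm_nonneg _) (fun k => ?_) hS
  simpa [consensusError] using PiLp.norm_apply_le (toLp 2 (consensusError (x k ω))) i

/-- **Almost-sure consensus of Algorithm 2** (Theorem 1 of the paper).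
Each agent `i` has a differentiable local objective `f i` with `ν`-Lipschitz and
`G`-bounded gradient; the weight matrix `W` is symmetric, doubly stochastic, with
`η = ‖W - (1/m)𝟙𝟙ᵀ‖ < 1` (spectral norm); stepsizes are square summable; the privacy
noises `N k ω i` have i.i.d. zero-mean Gaussian coordinates of variance `σ`, independent
across iterations, agents and coordinates.  Then almost surely every `‖x_i^k - x̄^k‖ → 0`. -/
theorem almost_sure_consensus
    {m d : ℕ} (hm : 0 < m)
    (f : Fin m → EuclideanSpace ℝ (Fin d) → ℝ)
    (hdiff : ∀ i, Differentiable ℝ (f i))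
    (ν G : ℝ≥0)
    (hLip : ∀ i, LipschitzWith ν (gradient (f i)))
    (hG : ∀ i θ, ‖gradient (f i) θ‖ ≤ (G : ℝ))
    (W : Matrix (Fin m) (Fin m) ℝ)
    (hWsymm : W.IsSymm)
    (hWnonneg : ∀ i j, 0 ≤ W i j)
    (hWrow : W *ᵥ (fun _ => (1 : ℝ)) = fun _ => 1)
    (hWcol : (fun _ => (1 : ℝ)) ᵥ* W = fun _ => 1)
    (hη : ‖Matrix.toEuclideanCLM (𝕜 := ℝ) (n := Fin m)
        (W - (m : ℝ)⁻¹ • Matrix.of (fun _ _ => (1 : ℝ)))‖ < 1)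
    (lam : ℕ → ℝ) (hlam : ∀ k, 0 ≤ lam k)
    (hsq : Summable (fun k => lam k ^ 2))
    {Ω : Type*} [MeasureSpace Ω] [IsProbabilityMeasure (ℙ : Measure Ω)]
    (σ : ℝ≥0)
    (N : ℕ → Ω → Fin m → EuclideanSpace ℝ (Fin d))
    (hdist : ∀ k i j, Measure.map (fun ω => N k ω i j) ℙ = gaussianReal 0 σ)
    (hindep : iIndepFun
      (fun p : ℕ × Fin m × Fin d => fun ω => N p.1 ω p.2.1 p.2.2) ℙ)
    (x : ℕ → Ω → Fin m → EuclideanSpace ℝ (Fin d))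
    (x0 : Fin m → EuclideanSpace ℝ (Fin d)) (hx0 : ∀ ω, x 0 ω = x0)
    (hx : ∀ k ω i, x (k + 1) ω i =
      ∑ j, W i j • (x k ω j - lam k • (gradient (f j) (x k ω j) + N k ω j))) :
    ∀ᵐ ω ∂ℙ, ∀ i,
      Tendsto (fun k => ‖x k ω i - (m : ℝ)⁻¹ • ∑ j, x k ω j‖) atTop (nhds 0) :=
  almost_sure_consensus_general f G hG W hWrow hWcol hη lam hlam hsq σ N hdist x hx
end

section
/- Summability of the weighted consensus deviation: Let x^{k+1} = (W ⊗ I_d)(x^k − λ^k u^k) with W symmetric doubly stochastic and η := ‖W − (1/m)𝟏𝟏ᵀ‖ ∈ (0,1), and averages x̄^k := (1/m)Σ_i x_i^k. Suppose the stepsizes λ^k ≥ 0 are non-increasing and square summable (Σ_k (λ^k)² < ∞) and the disturbances are uniformly bounded, ‖u^k‖ ≤ C for all k and some C < ∞. Then Σ_{k=0}^∞ λ^k ‖x^k − x̄^k ⊗ 𝟏‖ < ∞; in particular, if each ∇f_i is ν-Lipschitz and q^k := (1/m)Σ_{i=1}^m ∇f_i(x_i^k) − ∇F(x̄^k) with F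 := (1/m)Σ f_i, then Σ_{k=0}^∞ λ^k ‖q^k‖ < ∞. -/
/-!
Write `a k` for the consensus deviation `‖x k - x̄ k ⊗ 𝟏‖`. Because `W` is doubly stochastic,
the deviation of `x (k + 1)` is `(W - 𝟏𝟏ᵀ/m) ⊗ I_d` applied to `x k - λ k u k` minus any constant
vector, hence `a (k + 1) ≤ η (a k + λ k C)`. As `λ` is non-increasing, `b k := λ k a k` then
satisfies `b (k + 1) ≤ η b k + η C λ k²`, and summing this recursion bounds
`(1 - η) ∑_{k<n} b k` by `b 0 + η C ∑ λ k²`. The gradient discrepancy is at most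
`ν a k / √m` by the Lipschitz bound and Cauchy–Schwarz.
-/

open scoped Matrix NNReal

/-- The Euclidean norm of the stacked vector `(y 1, …, y m) ∈ ℝ^{md}`. -/
noncomputable def stackedNorm {m d : ℕ} (y : Fin m → EuclideanSpace ℝ (Fin d)) : ℝ :=
  Real.sqrt (∑ i, ‖y i‖ ^ 2)

open Finset

theorem summable_of_le_mul_add {b e : ℕ → ℝ} {η : ℝ} (hb : ∀ k, 0 ≤ b k) (hη : η < 1)
    (he : Summable e) (hrec : ∀ k, b (k + 1) ≤ η * b k + e k) : Summable b := by
  set E := ∑' k, |e k|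
  refine summable_of_sum_range_le hb (c := (b 0 + E) / (1 - η)) fun n => ?_
  have hstep : ∑ k ∈ range (n + 1), b k ≤ η * ∑ k ∈ range n, b k + E + b 0 := by
    rw [sum_range_succ', mul_sum]
    gcongr
    calc ∑ k ∈ range n, b (k + 1) ≤ ∑ k ∈ range n, (η * b k + |e k|) :=
          sum_le_sum fun k _ => (hrec k).trans (by gcongr; exact le_abs_self _)
      _ = _ := sum_add_distrib
      _ ≤ _ := by gcongr; exact he.abs.sum_le_tsum _ fun k _ => abs_nonneg _
  have hgrow : ∑ k ∈ range n, b k ≤ ∑ k ∈ range (n + 1), b k :=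
    sum_le_sum_of_subset_of_nonneg (range_subset_range.2 n.le_succ) fun k _ _ => hb k
  rw [le_div_iff₀ (sub_pos.2 hη)]
  linarith

theorem summable_mul_of_le_mul_add {a lam : ℕ → ℝ} {η C : ℝ} (ha : ∀ k, 0 ≤ a k)
    (hlam : ∀ k, 0 ≤ lam k) (hmono : Antitone lam) (hsq : Summable fun k => lam k ^ 2)
    (hη : η < 1) (hrec : ∀ k, a (k + 1) ≤ η * (a k + lam k * C)) :
    Summable fun k => lam k * a k := by
  refine summable_of_le_mul_add (fun k => mul_nonneg (hlam k) (ha k)) hη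
    (hsq.mul_left (η * C)) fun k => ?_
  calc lam (k + 1) * a (k + 1) ≤ lam k * a (k + 1) := by
        gcongr
        · exact ha _
        · exact hmono k.le_succ
    _ ≤ lam k * (η * (a k + lam k * C)) := by gcongr; exacts [hlam k, hrec k]
    _ = η * (lam k * a k) + η * C * lam k ^ 2 := by ring

section StackedNorm

variable {m d : ℕ}

theorem stackedNorm_eq_norm (y : Fin m → EuclideanSpace ℝ (Fin d)) :
    stackedNorm y = ‖(WithLp.toLp 2 y : PiLp 2 fun _ : Fin m => EuclideanSpace ℝ (Fin d))‖ := by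
  rw [PiLp.norm_eq_of_L2]; rfl

theorem stackedNorm_nonneg (y : Fin m → EuclideanSpace ℝ (Fin d)) : 0 ≤ stackedNorm y :=
  Real.sqrt_nonneg _

theorem stackedNorm_sub_le (y z : Fin m → EuclideanSpace ℝ (Fin d)) :
    stackedNorm (y - z) ≤ stackedNorm y + stackedNorm z := by
  simpa only [stackedNorm_eq_norm, WithLp.toLp_sub] using norm_sub_le _ _

theorem stackedNorm_smul (c : ℝ) (y : Fin m → EuclideanSpace ℝ (Fin d)) :
    stackedNorm (c • y) = |c| * stackedNorm y := by
  rw [stackedNorm_eq_norm, stackedNorm_eq_norm, WithLp.toLp_smul, norm_smul, Real.norm_eq_abs]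

theorem stackedNorm_sq_eq_sum_column (y : Fin m → EuclideanSpace ℝ (Fin d)) :
    stackedNorm y ^ 2 = ∑ r, ‖(WithLp.toLp 2 fun i => y i r : EuclideanSpace ℝ (Fin m))‖ ^ 2 := by
  rw [stackedNorm, Real.sq_sqrt (by positivity)]
  simp_rw [EuclideanSpace.norm_sq_eq]
  exact sum_comm

theorem stackedNorm_matrix_smul_le (A : Matrix (Fin m) (Fin m) ℝ)
    (y : Fin m → EuclideanSpace ℝ (Fin d)) :
    stackedNorm (fun i => ∑ j, A i j • y j)
      ≤ ‖Matrix.toEuclideanCLM (𝕜 := ℝ) (n := Fin m) A‖ * stackedNorm y := by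
  refine le_of_pow_le_pow_left₀ two_ne_zero (by positivity [stackedNorm_nonneg y]) ?_
  rw [mul_pow, stackedNorm_sq_eq_sum_column, stackedNorm_sq_eq_sum_column, mul_sum]
  refine sum_le_sum fun r _ => ?_
  have hcol : (WithLp.toLp 2 fun i => (∑ j, A i j • y j) r : EuclideanSpace ℝ (Fin m))
      = Matrix.toEuclideanCLM (𝕜 := ℝ) A (WithLp.toLp 2 fun i => y i r) := by
    ext i
    simp [Matrix.mulVec, dotProduct]
  rw [hcol, ← mul_pow]
  gcongr
  exact ContinuousLinearMap.le_opNorm _ _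

theorem sum_norm_le_sqrt_mul_stackedNorm (y : Fin m → EuclideanSpace ℝ (Fin d)) :
    ∑ i, ‖y i‖ ≤ Real.sqrt m * stackedNorm y := by
  rw [stackedNorm, ← Real.sqrt_mul (Nat.cast_nonneg m)]
  refine Real.le_sqrt_of_sq_le ?_
  simpa using sq_sum_le_card_mul_sum_sq (s := univ) (f := fun i => ‖y i‖)

end StackedNorm

section Consensus

variable {m : ℕ}

noncomputable def consensusDeviation {E : Type*} [AddCommGroup E] [Module ℝ E] (y : Fin m → E) :
    Fin m → E :=
  fun i => y i - (m : ℝ)⁻¹ • ∑ i', y i'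

theorem consensusDeviation_mix_eq {E : Type*} [AddCommGroup E] [Module ℝ E]
    {W : Matrix (Fin m) (Fin m) ℝ} (hrow : W *ᵥ (fun _ => (1 : ℝ)) = fun _ => 1)
    (hcol : (fun _ => (1 : ℝ)) ᵥ* W = fun _ => 1) (z : Fin m → E) (c : E) (i : Fin m) :
    consensusDeviation (fun i => ∑ j, W i j • z j) i = ∑ j, (W i j - (m : ℝ)⁻¹) • (z j - c) := by
  have hrow_i : ∑ j, W i j = 1 := by simpa [Matrix.mulVec, dotProduct] using congrFun hrow i
  have hcol_j : ∀ j, ∑ i, W i j = 1 := fun j => by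
    simpa [Matrix.vecMul, dotProduct] using congrFun hcol j
  have hm : (m : ℝ) * (m : ℝ)⁻¹ = 1 := mul_inv_cancel₀ (by have := i.pos; positivity)
  have hmean : ∑ i, ∑ j, W i j • z j = ∑ j, z j := by
    rw [sum_comm]; simp only [← sum_smul, hcol_j, one_smul]
  simp only [consensusDeviation, hmean, sub_smul, smul_sub, sum_sub_distrib, ← sum_smul, hrow_i,
    ← smul_sum, sum_const, card_univ, Fintype.card_fin, ← Nat.cast_smul_eq_nsmul ℝ]
  linear_combination (norm := module) -hm • c

variable {d : ℕ}

theorem stackedNorm_consensusDeviation_mix_le {W : Matrix (Fin m) (Fin m) ℝ}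
    (hrow : W *ᵥ (fun _ => (1 : ℝ)) = fun _ => 1) (hcol : (fun _ => (1 : ℝ)) ᵥ* W = fun _ => 1)
    {η : ℝ} (hη : ‖Matrix.toEuclideanCLM (𝕜 := ℝ) (n := Fin m)
        (W - (m : ℝ)⁻¹ • Matrix.of (fun _ _ => (1 : ℝ)))‖ ≤ η)
    {lam C : ℝ} (hlam : 0 ≤ lam) (x u : Fin m → EuclideanSpace ℝ (Fin d))
    (hu : stackedNorm u ≤ C) :
    stackedNorm (consensusDeviation fun i => ∑ j, W i j • (x j - lam • u j))
      ≤ η * (stackedNorm (consensusDeviation x) + lam * C) := by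
  set A := W - (m : ℝ)⁻¹ • Matrix.of (fun _ _ => (1 : ℝ))
  have hdev : consensusDeviation (fun i => ∑ j, W i j • (x j - lam • u j))
      = fun i => ∑ j, A i j • (consensusDeviation x - lam • u) j := by
    ext1 i
    rw [consensusDeviation_mix_eq hrow hcol _ ((m : ℝ)⁻¹ • ∑ i', x i') i]
    simp [A, consensusDeviation, sub_right_comm]
  have hsub : stackedNorm (consensusDeviation x - lam • u)
      ≤ stackedNorm (consensusDeviation x) + lam * C :=
    calc _ ≤ stackedNorm (consensusDeviation x) + stackedNorm (lam • u) := stackedNorm_sub_le _ _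
      _ ≤ _ := by rw [stackedNorm_smul, abs_of_nonneg hlam]; gcongr
  rw [hdev]
  exact (stackedNorm_matrix_smul_le A _).trans
    (mul_le_mul hη hsub (stackedNorm_nonneg _) ((norm_nonneg _).trans hη))

end Consensus

theorem gradient_const_mul_sum {ι F : Type*} [Fintype ι] [NormedAddCommGroup F]
    [InnerProductSpace ℝ F] [CompleteSpace F] {f : ι → F → ℝ} {θ : F}
    (hf : ∀ i, DifferentiableAt ℝ (f i) θ) (c : ℝ) :
    gradient (fun θ => c * ∑ i, f i θ) θ = c • ∑ i, gradient (f i) θ := by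
  simp only [gradient, fderiv_const_mul (DifferentiableAt.fun_sum fun i _ => hf i),
    fderiv_fun_sum fun i _ => hf i, map_smul, map_sum]

theorem norm_sum_sub_le_of_lipschitzWith {ι E F : Type*} [Fintype ι] [SeminormedAddCommGroup E]
    [SeminormedAddCommGroup F] {g : ι → E → F} {ν : ℝ≥0} (hg : ∀ i, LipschitzWith ν (g i))
    (x : ι → E) (y : E) :
    ‖∑ i, (g i (x i) - g i y)‖ ≤ ν * ∑ i, ‖x i - y‖ := by
  rw [mul_sum]
  exact (norm_sum_le _ _).trans (sum_le_sum fun i _ => (hg i).norm_sub_le _ _)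

theorem norm_mean_gradient_sub_le {m d : ℕ} {f : Fin m → EuclideanSpace ℝ (Fin d) → ℝ}
    (hdiff : ∀ i, Differentiable ℝ (f i)) {ν : ℝ≥0} (hLip : ∀ i, LipschitzWith ν (gradient (f i)))
    (x : Fin m → EuclideanSpace ℝ (Fin d)) :
    ‖(m : ℝ)⁻¹ • ∑ i, gradient (f i) (x i)
        - gradient (fun θ => (m : ℝ)⁻¹ * ∑ i, f i θ) ((m : ℝ)⁻¹ • ∑ i', x i')‖
      ≤ (m : ℝ)⁻¹ * ν * Real.sqrt m * stackedNorm (consensusDeviation x) := by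
  rw [gradient_const_mul_sum (fun i => hdiff i _), ← smul_sub, ← sum_sub_distrib, norm_smul,
    Real.norm_of_nonneg (by positivity), mul_assoc, mul_assoc]
  gcongr
  exact (norm_sum_sub_le_of_lipschitzWith hLip _ _).trans
    (mul_le_mul_of_nonneg_left (sum_norm_le_sqrt_mul_stackedNorm _) ν.coe_nonneg)

theorem weighted_consensus_deviation_summable_general
    {m d : ℕ}
    (W : Matrix (Fin m) (Fin m) ℝ)
    (hWrow : W *ᵥ (fun _ => (1 : ℝ)) = fun _ => 1)
    (hWcol : (fun _ => (1 : ℝ)) ᵥ* W = fun _ => 1)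
    (η : ℝ)
    (hη : η = ‖Matrix.toEuclideanCLM (𝕜 := ℝ) (n := Fin m)
        (W - (m : ℝ)⁻¹ • Matrix.of (fun _ _ => (1 : ℝ)))‖)
    (hη1 : η < 1)
    (lam : ℕ → ℝ) (hlam : ∀ k, 0 ≤ lam k)
    (hmono : Antitone lam)
    (hsq : Summable (fun k => lam k ^ 2))
    (u : ℕ → Fin m → EuclideanSpace ℝ (Fin d))
    (C : ℝ) (hu : ∀ k, stackedNorm (u k) ≤ C)
    (x : ℕ → Fin m → EuclideanSpace ℝ (Fin d))
    (hx : ∀ k i, x (k + 1) i = ∑ j, W i j • (x k j - lam k • u k j))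
    (f : Fin m → EuclideanSpace ℝ (Fin d) → ℝ)
    (hdiff : ∀ i, Differentiable ℝ (f i))
    (ν : ℝ≥0)
    (hLip : ∀ i, LipschitzWith ν (gradient (f i))) :
    Summable (fun k => lam k *
        stackedNorm (fun i => x k i - (m : ℝ)⁻¹ • ∑ i', x k i'))
    ∧ Summable (fun k => lam k *
        ‖(m : ℝ)⁻¹ • ∑ i, gradient (f i) (x k i)
          - gradient (fun θ => (m : ℝ)⁻¹ * ∑ i, f i θ) ((m : ℝ)⁻¹ • ∑ i', x k i')‖) := by
  have hrec : ∀ k, stackedNorm (consensusDeviation (x (k + 1)))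
      ≤ η * (stackedNorm (consensusDeviation (x k)) + lam k * C) := fun k => by
    rw [funext (hx k)]
    exact stackedNorm_consensusDeviation_mix_le hWrow hWcol hη.ge (hlam k) (x k) (u k) (hu k)
  have hdev : Summable fun k => lam k * stackedNorm (consensusDeviation (x k)) :=
    summable_mul_of_le_mul_add (fun k => stackedNorm_nonneg _) hlam hmono hsq hη1 hrec
  refine ⟨hdev, (hdev.mul_left ((m : ℝ)⁻¹ * ν * Real.sqrt m)).of_nonneg_of_le
    (fun k => mul_nonneg (hlam k) (norm_nonneg _)) fun k => ?_⟩
  calc _ ≤ lam k * ((m : ℝ)⁻¹ * ν * Real.sqrt m * stackedNorm (consensusDeviation (x k))) :=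
        mul_le_mul_of_nonneg_left (norm_mean_gradient_sub_le hdiff hLip (x k)) (hlam k)
    _ = _ := by ring

/-- **Summability of the weighted consensus deviation**: for the dynamics
`x^{k+1} = (W ⊗ I_d)(x^k - λ^k u^k)` with `W` symmetric doubly stochastic,
`η = ‖W - (1/m)𝟙𝟙ᵀ‖ ∈ (0,1)`, non-increasing square-summable stepsizes and uniformly
bounded disturbances, `∑_k λ^k ‖x^k - x̄^k ⊗ 𝟙‖ < ∞`; in particular, if every `∇f_i` is
`ν`-Lipschitz, then with `q^k = (1/m)∑ ∇f_i(x_i^k) - ∇F(x̄^k)` also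
`∑_k λ^k ‖q^k‖ < ∞`. -/
theorem weighted_consensus_deviation_summable
    {m d : ℕ} (hm : 0 < m)
    (W : Matrix (Fin m) (Fin m) ℝ)
    (hWsymm : W.IsSymm)
    (hWnonneg : ∀ i j, 0 ≤ W i j)
    (hWrow : W *ᵥ (fun _ => (1 : ℝ)) = fun _ => 1)
    (hWcol : (fun _ => (1 : ℝ)) ᵥ* W = fun _ => 1)
    (η : ℝ)
    (hη : η = ‖Matrix.toEuclideanCLM (𝕜 := ℝ) (n := Fin m)
        (W - (m : ℝ)⁻¹ • Matrix.of (fun _ _ => (1 : ℝ)))‖)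
    (hη0 : 0 < η) (hη1 : η < 1)
    (lam : ℕ → ℝ) (hlam : ∀ k, 0 ≤ lam k)
    (hmono : Antitone lam)
    (hsq : Summable (fun k => lam k ^ 2))
    (u : ℕ → Fin m → EuclideanSpace ℝ (Fin d))
    (C : ℝ) (hu : ∀ k, stackedNorm (u k) ≤ C)
    (x : ℕ → Fin m → EuclideanSpace ℝ (Fin d))
    (hx : ∀ k i, x (k + 1) i = ∑ j, W i j • (x k j - lam k • u k j))
    (f : Fin m → EuclideanSpace ℝ (Fin d) → ℝ)
    (hdiff : ∀ i, Differentiable ℝ (f i))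
    (ν : ℝ≥0)
    (hLip : ∀ i, LipschitzWith ν (gradient (f i))) :
    Summable (fun k => lam k *
        stackedNorm (fun i => x k i - (m : ℝ)⁻¹ • ∑ i', x k i'))
    ∧ Summable (fun k => lam k *
        ‖(m : ℝ)⁻¹ • ∑ i, gradient (f i) (x k i)
          - gradient (fun θ => (m : ℝ)⁻¹ * ∑ i, f i θ) ((m : ℝ)⁻¹ • ∑ i', x k i')‖) :=
  weighted_consensus_deviation_summable_general W hWrow hWcol η hη hη1 lam hlam hmono hsq u C hu x
    hx f hdiff ν hLip
end
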